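/- Let T′ ∈ (0, ∞), α ≥ 0, and let f : [0, T′) → ℝ be continuous. Suppose that for every t₀ ∈ [0, T′) there exist δ > 0 and a function μ, differentiable on (t₀ − δ, t₀ + δ), such that μ(t₀) = f(t₀), μ(t) ≥ f(t) for all t ∈ [0, T′) ∩ (t₀ − δ, t₀ + δ), and μ′(t) > −α·μ(t)/(T′ − t) for all t ∈ (t₀ − δ, t₀ + δ) ∩ [0, T′). Then the function t ↦ (T′ − t)^(−α) · f(t) is strictly monotone increasing on [0, T′): for all 0 ≤ t₁ < t₀ < T′ one has (T′ − t₁)^(−α) f(t₁) < (T′ − t₀)^(−α) f(t₀). -/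

import Mathlib

/-!
Write `g t = (T' - t) ^ (-α) * f t`. At each `p`, the barrier gives `g ≤ (T' - ·) ^ (-α) * μ`
near `p` with equality at `p`, and the barrier inequality says exactly that the right-hand side
has positive derivative at `p`; hence `g t < g p` for all `t` slightly to the left of `p`.
For a continuous function this left-local increase already forces strict monotonicity:
if `g b ≤ g a` with `a < b`, then `g` attains its minimum on `[a, b]` at some point of `(a, b]`,
and points just to the left of that minimiser contradict minimality.
-/

open Set Filter Topology

theorem HasDerivAt.eventually_nhdsLT_lt {f : ℝ → ℝ} {f' x : ℝ} (hf : HasDerivAt f f' x)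
    (hf' : 0 < f') : ∀ᶠ y in 𝓝[<] x, f y < f x := by
  filter_upwards [(hf.tendsto_slope.mono_left (nhdsLT_le_nhdsNE x)).eventually
    (eventually_gt_nhds hf'), self_mem_nhdsWithin] with y hslope hy
  exact (slope_pos_iff_gt hy).1 hslope

theorem ContinuousOn.strictMonoOn_of_eventually_nhdsLT_lt {α β : Type*}
    [ConditionallyCompleteLinearOrder α] [TopologicalSpace α] [OrderTopology α]
    [DenselyOrdered α] [LinearOrder β] [TopologicalSpace β] [ClosedIicTopology β]
    {g : α → β} {s : Set α} [s.OrdConnected] (hg : ContinuousOn g s)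
    (hleft : ∀ p ∈ s, ∀ᶠ t in 𝓝[<] p, t ∈ s → g t < g p) : StrictMonoOn g s := by
  intro a ha b hb hab
  by_contra! hba
  have hsub : Icc a b ⊆ s := Set.Icc_subset s ha hb
  obtain ⟨m, hm, hmin⟩ :=
    isCompact_Icc.exists_isMinOn (nonempty_Icc.2 hab.le) (hg.mono hsub)
  obtain ⟨p, hp, hpmin⟩ : ∃ p ∈ Ioc a b, IsMinOn g (Icc a b) p := by
    rcases hm.1.eq_or_lt with rfl | ham
    · exact ⟨b, ⟨hab, le_rfl⟩, fun t ht => hba.trans (hmin ht)⟩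
    · exact ⟨m, ⟨ham, hm.2⟩, hmin⟩
  have : (𝓝[<] p).NeBot := nhdsLT_neBot_of_exists_lt ⟨a, hp.1⟩
  obtain ⟨t, hlt, ht⟩ := ((hleft p (hsub (Ioc_subset_Icc_self hp))).and
    (Ico_mem_nhdsLT hp.1)).exists
  have htab : t ∈ Icc a b := ⟨ht.1, ht.2.le.trans hp.2⟩
  exact (hlt (hsub htab)).not_ge (hpmin htab)

theorem HasDerivAt.sub_rpow_neg_mul {μ : ℝ → ℝ} {μ' T α s : ℝ} (hμ : HasDerivAt μ μ' s)
    (hs : s < T) :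
    HasDerivAt (fun t => (T - t) ^ (-α) * μ t) ((T - s) ^ (-α) * (μ' + α * μ s / (T - s))) s := by
  have hpos : 0 < T - s := sub_pos.2 hs
  have hw := ((hasDerivAt_id s).const_sub T).rpow_const (p := -α) (Or.inl hpos.ne')
  refine (hw.mul hμ).congr_deriv ?_
  rw [id, Real.rpow_sub_one hpos.ne']
  field_simp
  ring

theorem eventually_weighted_lt_of_barrier {f μ : ℝ → ℝ} {T α p δ : ℝ} (hpT : p < T) (hδ : 0 < δ)
    (hμ : DifferentiableAt ℝ μ p) (hμp : μ p = f p)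
    (hle : ∀ t ∈ Ico 0 T, t ∈ Ioo (p - δ) (p + δ) → f t ≤ μ t)
    (hderiv : -α * μ p / (T - p) < deriv μ p) :
    ∀ᶠ t in 𝓝[<] p, t ∈ Ico 0 T → (T - t) ^ (-α) * f t < (T - p) ^ (-α) * f p := by
  have hslope : 0 < (T - p) ^ (-α) * (deriv μ p + α * μ p / (T - p)) := by
    refine mul_pos (Real.rpow_pos_of_pos (sub_pos.2 hpT) _) ?_
    rw [neg_mul, neg_div] at hderiv
    linarith
  filter_upwards [(hμ.hasDerivAt.sub_rpow_neg_mul hpT).eventually_nhdsLT_lt hslope,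
    Ioo_mem_nhdsLT (sub_lt_self p hδ)] with t hlt hnear ht
  calc (T - t) ^ (-α) * f t ≤ (T - t) ^ (-α) * μ t :=
        mul_le_mul_of_nonneg_left (hle t ht ⟨hnear.1, hnear.2.trans (lt_add_of_pos_right p hδ)⟩)
          (Real.rpow_nonneg (sub_nonneg.2 ht.2.le) _)
    _ < (T - p) ^ (-α) * μ p := hlt
    _ = (T - p) ^ (-α) * f p := by rw [hμp]

theorem barrier_strict_mono_weighted_general
    (T' α : ℝ)
    (f : ℝ → ℝ)
    (hf : ContinuousOn f (Set.Ico 0 T'))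
    (hbar : ∀ t₀ ∈ Set.Ico (0 : ℝ) T',
      ∃ δ > 0, ∃ μ : ℝ → ℝ,
        (∀ t ∈ Set.Ioo (t₀ - δ) (t₀ + δ), DifferentiableAt ℝ μ t) ∧
        μ t₀ = f t₀ ∧
        (∀ t ∈ Set.Ico (0 : ℝ) T', t ∈ Set.Ioo (t₀ - δ) (t₀ + δ) → f t ≤ μ t) ∧
        (∀ t ∈ Set.Ioo (t₀ - δ) (t₀ + δ), t ∈ Set.Ico (0 : ℝ) T' →
          -α * μ t / (T' - t) < deriv μ t)) :
    ∀ t₁ t₀ : ℝ, 0 ≤ t₁ → t₁ < t₀ → t₀ < T' →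
      (T' - t₁) ^ (-α) * f t₁ < (T' - t₀) ^ (-α) * f t₀ := by
  intro t₁ t₀ ht₁ h₁₀ h₀T
  have hcont : ContinuousOn (fun t => (T' - t) ^ (-α) * f t) (Ico 0 T') :=
    ((continuousOn_const.sub continuousOn_id).rpow_const
      fun t ht => Or.inl (sub_pos.2 ht.2).ne').mul hf
  refine hcont.strictMonoOn_of_eventually_nhdsLT_lt (fun p hp => ?_)
    ⟨ht₁, h₁₀.trans h₀T⟩ ⟨ht₁.trans h₁₀.le, h₀T⟩ h₁₀
  obtain ⟨δ, hδ, μ, hdiff, hμp, hle, hderiv⟩ := hbar p hp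
  have hpδ : p ∈ Ioo (p - δ) (p + δ) := ⟨sub_lt_self p hδ, lt_add_of_pos_right p hδ⟩
  exact eventually_weighted_lt_of_barrier hp.2 hδ (hdiff p hpδ) hμp hle (hderiv p hpδ hp)

/-- Abstract barrier argument with weight: if `f` is continuous on `[0, T')` and at every
`t₀ ∈ [0, T')` there is a differentiable barrier `μ` on `(t₀ - δ, t₀ + δ)` with
`μ t₀ = f t₀`, `μ ≥ f` on `[0, T') ∩ (t₀ - δ, t₀ + δ)` and
`μ' t > -α * μ t / (T' - t)` on `(t₀ - δ, t₀ + δ) ∩ [0, T')`, then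
`t ↦ (T' - t) ^ (-α) * f t` is strictly increasing on `[0, T')`. -/
theorem barrier_strict_mono_weighted
    (T' α : ℝ) (hT' : 0 < T') (hα : 0 ≤ α)
    (f : ℝ → ℝ)
    (hf : ContinuousOn f (Set.Ico 0 T'))
    (hbar : ∀ t₀ ∈ Set.Ico (0 : ℝ) T',
      ∃ δ > 0, ∃ μ : ℝ → ℝ,
        (∀ t ∈ Set.Ioo (t₀ - δ) (t₀ + δ), DifferentiableAt ℝ μ t) ∧
        μ t₀ = f t₀ ∧
        (∀ t ∈ Set.Ico (0 : ℝ) T', t ∈ Set.Ioo (t₀ - δ) (t₀ + δ) → f t ≤ μ t) ∧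
        (∀ t ∈ Set.Ioo (t₀ - δ) (t₀ + δ), t ∈ Set.Ico (0 : ℝ) T' →
          -α * μ t / (T' - t) < deriv μ t)) :
    ∀ t₁ t₀ : ℝ, 0 ≤ t₁ → t₁ < t₀ → t₀ < T' →
      (T' - t₁) ^ (-α) * f t₁ < (T' - t₀) ^ (-α) * f t₀ :=
  barrier_strict_mono_weighted_general T' α f hf hbar
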